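/- If A ⊆ ℤ is sufficiently sparse and F ⊆ ℤ is finite, then A + F is sufficiently sparse. -/

import Mathlib

open Pointwise

/-- `Σ_n(±A) = {x_1 + ... + x_k : k ≤ n, |x_i| ∈ A}`. -/
def SigmaSet (A : Set ℤ) (n : ℕ) : Set ℤ :=
  {x | ∃ k ≤ n, ∃ y : Fin k → ℤ, (∀ i, |y i| ∈ A) ∧ x = ∑ i, y i}

/-- `A` is sufficiently sparse if no `Σ_n(±A)` contains a nontrivial subgroup of `ℤ`. -/
def SuffSparse (A : Set ℤ) : Prop :=
  ∀ n : ℕ, ∀ H : AddSubgroup ℤ, (H : Set ℤ) ⊆ SigmaSet A n → H = ⊥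

/-!
Write each element of `Σ_n(±(A + F))` as `u + c` with `u ∈ Σ_n(±A)` and `|c| ≤ C := n · max |F|`.
If `z ≠ 0` generates a subgroup inside `Σ_n(±(A + F))`, then for every `t`, pigeonholing the
errors `c` of `0, t z, …, (2C + 1) t z` gives some `1 ≤ r ≤ 2C + 1` with `r t z ∈ Σ_{2n}(±A)`.
Since every such `r` divides `N := (2C + 1)!`, all multiples of `N z` lie in `Σ_{2nN}(±A)`,
a nontrivial subgroup.
-/

namespace SigmaSet

variable {A : Set ℤ}

theorem zero_mem (n : ℕ) : (0 : ℤ) ∈ SigmaSet A n :=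
  ⟨0, Nat.zero_le n, Fin.elim0, fun i => i.elim0, by simp⟩

theorem mono {m n : ℕ} (h : m ≤ n) : SigmaSet A m ⊆ SigmaSet A n := by
  rintro x ⟨k, hk, y, hy, rfl⟩
  exact ⟨k, hk.trans h, y, hy, rfl⟩

theorem mem_one_of_abs_mem {a : ℤ} (ha : |a| ∈ A) : a ∈ SigmaSet A 1 :=
  ⟨1, le_rfl, ![a], fun _ => by simpa using ha, by simp⟩

theorem add_mem {m n : ℕ} {x y : ℤ} (hx : x ∈ SigmaSet A m) (hy : y ∈ SigmaSet A n) :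
    x + y ∈ SigmaSet A (m + n) := by
  obtain ⟨k, hk, u, hu, rfl⟩ := hx
  obtain ⟨l, hl, v, hv, rfl⟩ := hy
  refine ⟨k + l, Nat.add_le_add hk hl, Fin.append u v, fun i => ?_, by simp [Fin.sum_univ_add]⟩
  induction i using Fin.addCases <;> simp [hu, hv]

theorem neg_mem {n : ℕ} {x : ℤ} (hx : x ∈ SigmaSet A n) : -x ∈ SigmaSet A n := by
  obtain ⟨k, hk, y, hy, rfl⟩ := hx
  exact ⟨k, hk, fun i => -y i, by simpa using hy, by simp⟩

theorem sum_mem {ι : Type*} {m : ℕ} (s : Finset ι) {f : ι → ℤ}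
    (hf : ∀ i ∈ s, f i ∈ SigmaSet A m) : ∑ i ∈ s, f i ∈ SigmaSet A (s.card * m) := by
  induction s using Finset.cons_induction with
  | empty => simpa using zero_mem 0
  | cons a s _ ih =>
    rw [Finset.sum_cons, Finset.card_cons, Nat.succ_mul, add_comm (s.card * m)]
    exact add_mem (hf a (Finset.mem_cons_self a s))
      (ih fun i hi => hf i (Finset.mem_cons_of_mem hi))

theorem natCast_mul_mem {m : ℕ} {x : ℤ} (hx : x ∈ SigmaSet A m) (q : ℕ) :
    (q : ℤ) * x ∈ SigmaSet A (q * m) := by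
  simpa using sum_mem (Finset.range q) fun _ _ => hx

theorem exists_abs_sub_le_of_forall_abs_mem {B : Set ℤ} {m M n : ℕ}
    (hB : ∀ y, |y| ∈ B → ∃ u ∈ SigmaSet A m, |y - u| ≤ M) {x : ℤ} (hx : x ∈ SigmaSet B n) :
    ∃ u ∈ SigmaSet A (n * m), |x - u| ≤ n * M := by
  obtain ⟨k, hk, y, hy, rfl⟩ := hx
  choose u hu hyu using fun i => hB (y i) (hy i)
  have hsum : ∑ i, u i ∈ SigmaSet A (k * m) := by
    simpa using sum_mem Finset.univ fun i _ => hu i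
  refine ⟨∑ i, u i, mono (Nat.mul_le_mul_right m hk) hsum, ?_⟩
  calc |∑ i, y i - ∑ i, u i| ≤ ∑ i, |y i - u i| := by
        rw [← Finset.sum_sub_distrib]; exact Finset.abs_sum_le_sum_abs _ _
    _ ≤ ∑ _i : Fin k, (M : ℤ) := Finset.sum_le_sum fun i _ => hyu i
    _ ≤ n * M := by simpa using mul_le_mul_of_nonneg_right (Nat.cast_le.2 hk) M.cast_nonneg

theorem exists_abs_sub_le_of_abs_mem_add {F : Set ℤ} {M : ℕ} (hM : ∀ f ∈ F, |f| ≤ M) {y : ℤ}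
    (hy : |y| ∈ A + F) : ∃ u ∈ SigmaSet A 1, |y - u| ≤ M := by
  obtain ⟨a, ha, f, hf, hyaf⟩ := hy
  have hfM := hM f hf
  rcases lt_or_ge a 0 with ha0 | ha0
  · exact ⟨0, zero_mem 1, by rw [sub_zero]; linarith [le_abs_self f]⟩
  have haA : |a| ∈ A := by rwa [abs_of_nonneg ha0]
  rcases abs_choice y with hy | hy
  · exact ⟨a, mem_one_of_abs_mem haA, by rwa [show y - a = f by linarith]⟩
  · refine ⟨-a, mem_one_of_abs_mem (by rwa [abs_neg]), ?_⟩
    rwa [show y - -a = -f by linarith, abs_neg]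

theorem exists_natCast_mul_mem_of_forall_near {m C : ℕ} {x : ℤ}
    (h : ∀ j : ℕ, ∃ u ∈ SigmaSet A m, |j * x - u| ≤ C) :
    ∃ r : ℕ, 0 < r ∧ r ≤ 2 * C + 1 ∧ (r : ℤ) * x ∈ SigmaSet A (2 * m) := by
  choose u hu hux using h
  have hmaps : ∀ j ∈ Finset.range (2 * C + 2), j * x - u j ∈ Finset.Icc (-(C : ℤ)) C :=
    fun j _ => Finset.mem_Icc.2 (abs_le.1 (hux j))
  have hcard : (Finset.Icc (-(C : ℤ)) C).card < (Finset.range (2 * C + 2)).card := by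
    simp only [Int.card_Icc, Finset.card_range]; omega
  obtain ⟨i, hi, j, hj, hne, heq⟩ := Finset.exists_ne_map_eq_of_card_lt_of_maps_to hcard hmaps
  wlog hij : i < j generalizing i j
  · exact this j hj i hi hne.symm heq.symm (by omega)
  refine ⟨j - i, by omega, by simp only [Finset.mem_range] at hj; omega, ?_⟩
  have hdiff : ((j - i : ℕ) : ℤ) * x = u j + -u i := by push_cast [hij.le]; linarith
  rw [hdiff, two_mul]
  exact add_mem (hu j) (neg_mem (hu i))

theorem zmultiples_factorial_mul_subset {m C : ℕ} {z : ℤ}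
    (h : ∀ t : ℤ, ∃ u ∈ SigmaSet A m, |t * z - u| ≤ C) :
    (AddSubgroup.zmultiples (((2 * C + 1).factorial : ℤ) * z) : Set ℤ) ⊆
      SigmaSet A ((2 * C + 1).factorial * (2 * m)) := by
  rintro _ ⟨t, rfl⟩
  obtain ⟨r, hr, hrC, hrtz⟩ :=
    exists_natCast_mul_mem_of_forall_near (x := t * z) fun j => by simpa [mul_assoc] using h (j * t)
  obtain ⟨q, hq⟩ := Nat.dvd_factorial hr hrC
  have hmul : t • (((2 * C + 1).factorial : ℤ) * z) = (q : ℤ) * (r * (t * z)) := by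
    rw [zsmul_eq_mul, hq]; push_cast; ring
  change t • _ ∈ _
  rw [hmul]
  refine mono ?_ (natCast_mul_mem hrtz q)
  exact Nat.mul_le_mul_right _ (hq ▸ Nat.le_mul_of_pos_left q hr)

end SigmaSet

theorem SuffSparse.of_forall_exists_near {A B : Set ℤ} (hA : SuffSparse A)
    (hB : ∀ n, ∃ m C : ℕ, ∀ x ∈ SigmaSet B n, ∃ u ∈ SigmaSet A m, |x - u| ≤ C) :
    SuffSparse B := by
  intro n H hH
  obtain ⟨m, C, hnear⟩ := hB n
  refine (AddSubgroup.eq_bot_iff_forall H).2 fun z hz => ?_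
  have hsub := SigmaSet.zmultiples_factorial_mul_subset fun t =>
    hnear _ (hH (by simpa using H.zsmul_mem hz t))
  simpa [AddSubgroup.zmultiples_eq_bot, Nat.factorial_ne_zero] using hA _ _ hsub

/-- If `A ⊆ ℤ` is sufficiently sparse and `F ⊆ ℤ` is finite then `A + F` is
sufficiently sparse. -/
theorem stmt17 (A F : Set ℤ) (hA : SuffSparse A) (hF : F.Finite) :
    SuffSparse (A + F) := by
  obtain ⟨M, hM⟩ := (hF.image Int.natAbs).bddAbove
  have hFM : ∀ f ∈ F, |f| ≤ M := fun f hf => by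
    rw [Int.abs_eq_natAbs]; exact_mod_cast hM ⟨f, hf, rfl⟩
  refine hA.of_forall_exists_near fun n => ⟨n * 1, n * M, fun x hx => ?_⟩
  exact_mod_cast SigmaSet.exists_abs_sub_le_of_forall_abs_mem
    (fun _ hy => SigmaSet.exists_abs_sub_le_of_abs_mem_add hFM hy) hx
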